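/- arXiv:2505.12947 — 2 statements merged into one kernel-verified Lean document; each statement's English description precedes it below -/
import Mathlib

section
/- The S-unit equation u + v = 1 with u, v ∈ ℤ[1/S]× for S = {2,3} has exactly 21 solutions (u,v). -/
/-!
Clearing denominators turns a solution of `u + v = 1` into `a + b = c` with `a, b, c` pairwise
coprime 3-smooth integers; moving the negative term, if any, to the other side gives
`x + y = z` in positive integers. As 2 and 3 each divide at most one of `x, y, z` and `z > 1`,
one of `x, y` is `1`, and the equations `2 ^ m + 1 = 3 ^ n`, `3 ^ n + 1 = 2 ^ m` (settled by
congruences mod 8, 16 and 5) leave the seven sums `1 + 1, 1 + 2, 1 + 3, 1 + 8` up to order.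
Each of them yields three solutions, one for each term of `x + y = z` one divides by.
-/

/-- `u` is a unit of `ℤ[1/S]` for `S = {2,3}`, i.e. a rational of the form `±2^a·3^b`. -/
def IsS23Unit (u : ℚ) : Prop := ∃ a b : ℤ, u = 2 ^ a * 3 ^ b ∨ u = -(2 ^ a * 3 ^ b)

def IsS23Smooth (n : ℕ) : Prop := ∃ a b : ℕ, n = 2 ^ a * 3 ^ b

namespace IsS23Smooth

lemma ne_zero {n : ℕ} (hn : IsS23Smooth n) : n ≠ 0 := by
  obtain ⟨a, b, rfl⟩ := hn
  positivity

lemma of_dvd {m n : ℕ} (hn : IsS23Smooth n) (hmn : m ∣ n) : IsS23Smooth m := by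
  obtain ⟨a, b, rfl⟩ := hn
  obtain ⟨m₂, m₃, h₂, h₃, rfl⟩ := Nat.dvd_mul.mp hmn
  obtain ⟨i, -, rfl⟩ := (Nat.dvd_prime_pow Nat.prime_two).mp h₂
  obtain ⟨j, -, rfl⟩ := (Nat.dvd_prime_pow Nat.prime_three).mp h₃
  exact ⟨i, j, rfl⟩

lemma eq_one_or_two_dvd_or_three_dvd {n : ℕ} (hn : IsS23Smooth n) :
    n = 1 ∨ 2 ∣ n ∨ 3 ∣ n := by
  obtain ⟨_ | a, _ | b, rfl⟩ := hn
  · exact Or.inl rfl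
  · exact Or.inr (Or.inr (dvd_mul_of_dvd_right (dvd_pow_self 3 b.succ_ne_zero) _))
  all_goals exact Or.inr (Or.inl (dvd_mul_of_dvd_left (dvd_pow_self 2 a.succ_ne_zero) _))

lemma eq_two_pow_of_not_three_dvd {n : ℕ} (hn : IsS23Smooth n) (h3 : ¬ 3 ∣ n) :
    ∃ a, n = 2 ^ a := by
  obtain ⟨a, _ | b, rfl⟩ := hn
  · exact ⟨a, by simp⟩
  · exact absurd (Dvd.intro_left (2 ^ a * 3 ^ b) (by ring)) h3

lemma eq_three_pow_of_not_two_dvd {n : ℕ} (hn : IsS23Smooth n) (h2 : ¬ 2 ∣ n) :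
    ∃ b, n = 3 ^ b := by
  obtain ⟨_ | a, b, rfl⟩ := hn
  · exact ⟨b, by simp⟩
  · exact absurd (Dvd.intro (2 ^ a * 3 ^ b) (by ring)) h2

end IsS23Smooth

lemma Nat.ModEq.pow_modEq_pow_mod {a k m : ℕ} (h : a ^ k ≡ 1 [MOD m]) (n : ℕ) :
    a ^ n ≡ a ^ (n % k) [MOD m] := by
  conv_lhs => rw [← Nat.div_add_mod n k, pow_add, pow_mul]
  simpa using (h.pow (n / k)).mul_right (a ^ (n % k))

lemma three_pow_add_one_eq_two_pow {m n : ℕ} (h : 3 ^ n + 1 = 2 ^ m) : n = 0 ∨ n = 1 := by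
  by_contra! hn
  have hm : 3 ≤ m := by
    by_contra! hm
    have : 3 ^ 2 ≤ 3 ^ n := Nat.pow_le_pow_right (by norm_num) (by omega)
    interval_cases m <;> omega
  have h8 : 2 ^ 3 ∣ 2 ^ m := Nat.pow_dvd_pow 2 hm
  have hcycle : 3 ^ n ≡ 3 ^ (n % 2) [MOD 8] := Nat.ModEq.pow_modEq_pow_mod (by decide) n
  -- `3 ^ n ≡ 1` or `3 [MOD 8]`, so `3 ^ n + 1` is never divisible by 8
  rcases Nat.mod_two_eq_zero_or_one n with hr | hr <;>
    simp only [hr, Nat.ModEq] at hcycle <;> omega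

lemma two_pow_add_one_eq_three_pow {m n : ℕ} (h : 2 ^ m + 1 = 3 ^ n) : m = 1 ∨ m = 3 := by
  rcases Nat.lt_or_ge m 4 with hm | hm
  · have hn : n < 3 := by
      have : 3 ^ n < 3 ^ 3 := by interval_cases m <;> omega
      exact (Nat.pow_lt_pow_iff_right (by norm_num)).mp this
    interval_cases m <;> interval_cases n <;> omega
  · -- `3 ^ n ≡ 1 [MOD 16]` forces `4 ∣ n`, and then `5 ∣ 3 ^ n - 1 = 2 ^ m`
    exfalso
    have h16 : 2 ^ 4 ∣ 2 ^ m := Nat.pow_dvd_pow 2 hm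
    have hcycle16 : 3 ^ n ≡ 3 ^ (n % 4) [MOD 16] := Nat.ModEq.pow_modEq_pow_mod (by decide) n
    have hcycle5 : 3 ^ n ≡ 3 ^ (n % 4) [MOD 5] := Nat.ModEq.pow_modEq_pow_mod (by decide) n
    have h5 : ¬ 5 ∣ 2 ^ m := fun h5 => by
      have := Nat.prime_five.dvd_of_dvd_pow h5
      omega
    have : n % 4 < 4 := Nat.mod_lt _ (by norm_num)
    interval_cases hr : n % 4 <;> norm_num [Nat.ModEq] at hcycle16 hcycle5 <;> omega

namespace IsS23Smooth

lemma eq_of_add_one {y : ℕ} (hy : IsS23Smooth y) (hz : IsS23Smooth (y + 1)) :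
    y = 1 ∨ y = 2 ∨ y = 3 ∨ y = 8 := by
  have hy0 := hy.ne_zero
  by_cases h2 : 2 ∣ y
  · obtain ⟨_ | b, hb⟩ := hz.eq_three_pow_of_not_two_dvd (by omega)
    · simp at hb
      omega
    obtain ⟨a, rfl⟩ := hy.eq_two_pow_of_not_three_dvd fun h3 => by
      have := hb ▸ dvd_pow_self 3 b.succ_ne_zero
      omega
    rcases two_pow_add_one_eq_three_pow hb with rfl | rfl <;> simp
  · obtain ⟨_ | b, rfl⟩ := hy.eq_three_pow_of_not_two_dvd h2
    · simp
    obtain ⟨a, ha⟩ := hz.eq_two_pow_of_not_three_dvd fun h3 => by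
      have := dvd_pow_self 3 b.succ_ne_zero
      omega
    rcases three_pow_add_one_eq_two_pow ha with h | h <;> simp_all

lemma eq_one_or_eq_one_of_coprime {x y : ℕ} (hco : x.Coprime y) (hx : IsS23Smooth x)
    (hy : IsS23Smooth y) (hxy : IsS23Smooth (x + y)) : x = 1 ∨ y = 1 := by
  by_contra! hne
  have hp : ∀ p, 1 < p → ¬ (p ∣ x ∧ p ∣ y) := fun p hp ⟨hpx, hpy⟩ => by
    have := Nat.dvd_one.mp (hco ▸ Nat.dvd_gcd hpx hpy)
    omega
  have h2 := hp 2 (by norm_num)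
  have h3 := hp 3 (by norm_num)
  rcases hx.eq_one_or_two_dvd_or_three_dvd with _ | _ | _ <;>
    rcases hy.eq_one_or_two_dvd_or_three_dvd with _ | _ | _ <;>
    rcases hxy.eq_one_or_two_dvd_or_three_dvd with _ | _ | _ <;> omega

end IsS23Smooth

def primitiveSmoothSums : Finset (ℕ × ℕ) :=
  {(1, 1), (1, 2), (2, 1), (1, 3), (3, 1), (1, 8), (8, 1)}

lemma mem_primitiveSmoothSums {x y : ℕ} (hco : x.Coprime y) (hx : IsS23Smooth x)
    (hy : IsS23Smooth y) (hxy : IsS23Smooth (x + y)) : (x, y) ∈ primitiveSmoothSums := by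
  rcases hx.eq_one_or_eq_one_of_coprime hco hy hxy with rfl | rfl
  · rcases hy.eq_of_add_one (by rwa [add_comm]) with rfl | rfl | rfl | rfl <;> decide
  · rcases hx.eq_of_add_one hxy with rfl | rfl | rfl | rfl <;> decide

lemma IsS23Unit.neg {u : ℚ} (hu : IsS23Unit u) : IsS23Unit (-u) := by
  obtain ⟨a, b, rfl | rfl⟩ := hu
  · exact ⟨a, b, Or.inr rfl⟩
  · exact ⟨a, b, Or.inl (neg_neg _)⟩

lemma IsS23Smooth.isS23Unit_div {m n : ℕ} (hm : IsS23Smooth m) (hn : IsS23Smooth n) :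
    IsS23Unit (m / n) := by
  obtain ⟨a, b, rfl⟩ := hm
  obtain ⟨c, d, rfl⟩ := hn
  refine ⟨a - c, b - d, Or.inl ?_⟩
  push_cast
  rw [zpow_sub₀ two_ne_zero, zpow_sub₀ three_ne_zero]
  simp only [zpow_natCast]
  ring

lemma IsS23Unit.exists_eq_div {u : ℚ} (hu : IsS23Unit u) :
    ∃ m n : ℕ, IsS23Smooth m ∧ IsS23Smooth n ∧ (u = m / n ∨ u = -(m / n)) := by
  obtain ⟨a, b, hab⟩ := hu
  have hsplit (t : ℚ) (k : ℤ) (ht : t ≠ 0) : t ^ k = t ^ k.toNat / t ^ (-k).toNat := by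
    rw [← zpow_natCast, ← zpow_natCast, ← zpow_sub₀ ht, Int.toNat_sub_toNat_neg]
  refine ⟨2 ^ a.toNat * 3 ^ b.toNat, 2 ^ (-a).toNat * 3 ^ (-b).toNat,
    ⟨_, _, rfl⟩, ⟨_, _, rfl⟩, ?_⟩
  rw [hsplit 2 a two_ne_zero, hsplit 3 b three_ne_zero] at hab
  push_cast
  rw [mul_div_mul_comm]
  exact hab

lemma IsS23Smooth.isS23Smooth_num_den_div {m n : ℕ} (hm : IsS23Smooth m) (hn : IsS23Smooth n) :
    IsS23Smooth (m / n : ℚ).num.natAbs ∧ IsS23Smooth (m / n : ℚ).den := by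
  have hn0 : (n : ℤ) ≠ 0 := by exact_mod_cast hn.ne_zero
  have hq : (m / n : ℚ) = Rat.divInt m n := by rw [Rat.divInt_eq_div]; push_cast; rfl
  rw [hq]
  have hnum := Int.natAbs_dvd_natAbs.mpr (Rat.num_dvd m hn0)
  rw [Int.natAbs_natCast] at hnum
  exact ⟨hm.of_dvd hnum, hn.of_dvd (Int.natCast_dvd_natCast.mp (Rat.den_dvd _ _))⟩

lemma IsS23Unit.isS23Smooth_num_den {u : ℚ} (hu : IsS23Unit u) :
    IsS23Smooth u.num.natAbs ∧ IsS23Smooth u.den := by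
  obtain ⟨m, n, hm, hn, rfl | rfl⟩ := hu.exists_eq_div
  · exact hm.isS23Smooth_num_den_div hn
  · simpa using hm.isS23Smooth_num_den_div hn

lemma Rat.den_eq_and_num_add_num_eq_den {u v : ℚ} (huv : u + v = 1) :
    v.den = u.den ∧ u.num + v.num = u.den := by
  have hden : v.den = u.den := by
    rw [show v = 1 - u by linarith]
    simp
  refine ⟨hden, ?_⟩
  have hd : (u.den : ℚ) ≠ 0 := by positivity
  rw [← Rat.num_div_den u, ← Rat.num_div_den v, hden, ← add_div, div_eq_one_iff_eq hd] at huv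
  exact_mod_cast huv

/-- The three ways of dividing `x + y = z` by one of its terms. -/
def sUnitSolutionsOf (x y : ℕ) : Finset (ℚ × ℚ) :=
  {((x : ℚ) / (x + y), (y : ℚ) / (x + y)), (-(y : ℚ) / x, ((x : ℚ) + y) / x),
    (((x : ℚ) + y) / y, -(x : ℚ) / y)}

lemma exists_mem_sUnitSolutionsOf_of_add_eq {a b : ℤ} {d : ℕ} (hab : a + b = d)
    (ha : IsS23Smooth a.natAbs) (hb : IsS23Smooth b.natAbs) (hd : IsS23Smooth d)
    (hcoa : a.natAbs.Coprime d) (hcob : b.natAbs.Coprime d) :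
    ∃ x y : ℕ, x.Coprime y ∧ IsS23Smooth x ∧ IsS23Smooth y ∧ IsS23Smooth (x + y) ∧
      ((a / d : ℚ), (b / d : ℚ)) ∈ sUnitSolutionsOf x y := by
  simp only [sUnitSolutionsOf, Finset.mem_insert, Finset.mem_singleton, Prod.mk.injEq]
  rcases le_or_gt 0 a with ha₀ | ha₀
  · lift a to ℕ using ha₀
    rcases le_or_gt 0 b with hb₀ | hb₀
    · lift b to ℕ using hb₀
      obtain rfl : a + b = d := by exact_mod_cast hab
      simp only [Int.natAbs_natCast] at ha hb hcoa
      exact ⟨a, b, Nat.coprime_self_add_right.mp hcoa, ha, hb, hd, Or.inl (by push_cast; simp)⟩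
    · obtain ⟨x, rfl⟩ := Int.exists_eq_neg_ofNat hb₀.le
      obtain rfl : a = x + d := by omega
      simp only [Int.natAbs_natCast, Int.natAbs_neg] at ha hb hcob
      exact ⟨x, d, hcob, hb, hd, ha, Or.inr (Or.inr (by push_cast; simp [neg_div]))⟩
  · obtain ⟨y, rfl⟩ := Int.exists_eq_neg_ofNat ha₀.le
    lift b to ℕ using (by omega)
    obtain rfl : b = d + y := by omega
    simp only [Int.natAbs_natCast, Int.natAbs_neg] at ha hb hcoa
    exact ⟨d, y, hcoa.symm, hd, ha, hb, Or.inr (Or.inl (by push_cast; simp [neg_div]))⟩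

lemma isS23Unit_of_mem_sUnitSolutionsOf {x y : ℕ} (hx : IsS23Smooth x) (hy : IsS23Smooth y)
    (hxy : IsS23Smooth (x + y)) {u v : ℚ} (h : (u, v) ∈ sUnitSolutionsOf x y) :
    IsS23Unit u ∧ IsS23Unit v ∧ u + v = 1 := by
  have hx₀ : (x : ℚ) ≠ 0 := by exact_mod_cast hx.ne_zero
  have hy₀ : (y : ℚ) ≠ 0 := by exact_mod_cast hy.ne_zero
  have hxy₀ : (x : ℚ) + y ≠ 0 := by exact_mod_cast hxy.ne_zero
  simp only [sUnitSolutionsOf, Finset.mem_insert, Finset.mem_singleton, Prod.mk.injEq] at h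
  rcases h with ⟨rfl, rfl⟩ | ⟨rfl, rfl⟩ | ⟨rfl, rfl⟩
  · refine ⟨by exact_mod_cast hx.isS23Unit_div hxy, by exact_mod_cast hy.isS23Unit_div hxy, ?_⟩
    field_simp
  · refine ⟨by simpa [neg_div] using (hy.isS23Unit_div hx).neg,
      by exact_mod_cast hxy.isS23Unit_div hx, ?_⟩
    field_simp
    ring
  · refine ⟨by exact_mod_cast hxy.isS23Unit_div hy,
      by simpa [neg_div] using (hx.isS23Unit_div hy).neg, ?_⟩
    field_simp
    ring

lemma isS23Smooth_of_mem_primitiveSmoothSums {p : ℕ × ℕ} (hp : p ∈ primitiveSmoothSums) :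
    IsS23Smooth p.1 ∧ IsS23Smooth p.2 ∧ IsS23Smooth (p.1 + p.2) := by
  have hdvd : p.1 ∣ 72 ∧ p.2 ∣ 72 ∧ p.1 + p.2 ∣ 72 := by
    revert p
    decide
  have h72 : IsS23Smooth 72 := ⟨3, 2, rfl⟩
  exact ⟨h72.of_dvd hdvd.1, h72.of_dvd hdvd.2.1, h72.of_dvd hdvd.2.2⟩

def s23Solutions : Finset (ℚ × ℚ) :=
  primitiveSmoothSums.biUnion fun p => sUnitSolutionsOf p.1 p.2

lemma mem_s23Solutions_iff {u v : ℚ} :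
    (u, v) ∈ s23Solutions ↔ IsS23Unit u ∧ IsS23Unit v ∧ u + v = 1 := by
  constructor
  · intro h
    obtain ⟨p, hp, huv⟩ := Finset.mem_biUnion.mp h
    obtain ⟨hx, hy, hxy⟩ := isS23Smooth_of_mem_primitiveSmoothSums hp
    exact isS23Unit_of_mem_sUnitSolutionsOf hx hy hxy huv
  · rintro ⟨hu, hv, huv⟩
    obtain ⟨hden, hsum⟩ := Rat.den_eq_and_num_add_num_eq_den huv
    obtain ⟨hu_num, hu_den⟩ := hu.isS23Smooth_num_den
    have hv_num := hv.isS23Smooth_num_den.1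
    have hv_co : v.num.natAbs.Coprime u.den := hden ▸ v.reduced
    obtain ⟨x, y, hco, hx, hy, hxy, hmem⟩ :=
      exists_mem_sUnitSolutionsOf_of_add_eq hsum hu_num hv_num hu_den u.reduced hv_co
    rw [Rat.num_div_den, ← hden, Rat.num_div_den] at hmem
    exact Finset.mem_biUnion.mpr ⟨(x, y), mem_primitiveSmoothSums hco hx hy hxy, hmem⟩

lemma card_s23Solutions : s23Solutions.card = 21 := by
  simp only [s23Solutions, primitiveSmoothSums, sUnitSolutionsOf]
  norm_num

/-- The `S`-unit equation `u + v = 1` with `u, v ∈ ℤ[1/S]ˣ` for `S = {2,3}` has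
exactly `21` solutions `(u, v)`. -/
theorem sUnitEquation_S_eq_two_three :
    {p : ℚ × ℚ | IsS23Unit p.1 ∧ IsS23Unit p.2 ∧ p.1 + p.2 = 1}.ncard = 21 := by
  have hset : {p : ℚ × ℚ | IsS23Unit p.1 ∧ IsS23Unit p.2 ∧ p.1 + p.2 = 1} = s23Solutions :=
    Set.ext fun _ => mem_s23Solutions_iff.symm
  rw [hset, Set.ncard_coe_finset, card_s23Solutions]
end

section
/- The S-unit equation u + v = 1 with u, v ∈ ℤ[1/S]× for S = {2,5} has exactly 9 solutions (u,v). -/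
/-- `u` is a unit of `ℤ[1/S]` for `S = {2,5}`, i.e. a rational of the form `±2^a·5^b`. -/
def IsS25Unit (u : ℚ) : Prop := ∃ a b : ℤ, u = 2 ^ a * 5 ^ b ∨ u = -(2 ^ a * 5 ^ b)

/-!
Write a solution as `u = x / n` in lowest terms. Then `v = 1 - u = (n - x) / n`, and `|x|`,
`|n - x|`, `n` are pairwise coprime natural numbers whose only prime factors are `2` and `5`;
moving the negative term to the other side turns `x + (n - x) = n` into an equation `a + b = c`
of such numbers. Since `2` and `5` each divide at most one of `a, b, c`, the equation becomes
`1 + 1 = 2`, `1 + 5^q = 2^e` or `1 + 2^e = 5^q`. The last two are settled by congruences: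
modulo `4` for the first, modulo `3` and `8` for the second, leaving `1 + 4 = 5`.
-/

namespace Nat

theorem two_pow_eq_five_pow_add_one {e q : ℕ} (h : 2 ^ e = 5 ^ q + 1) : e = 1 ∧ q = 0 := by
  have h5 : 5 ^ q % 4 = 1 := by simp [pow_mod]
  have he : e < 2 := by
    by_contra! he
    have : 2 ^ e % 4 = 0 := mod_eq_zero_of_dvd (pow_dvd_pow 2 he)
    omega
  interval_cases e
  · simp at h
  · simpa using h

theorem five_pow_eq_two_pow_add_one {e q : ℕ} (h : 5 ^ q = 2 ^ e + 1) : q = 1 ∧ e = 2 := by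
  obtain ⟨k, rfl | rfl⟩ := even_or_odd' q
  · have h3 : 5 ^ (2 * k) % 3 = 1 := by simp [pow_mul, pow_mod]
    have : 3 ∣ 2 ^ e := by omega
    exact absurd (prime_three.dvd_of_dvd_pow this) (by norm_num)
  · have h8 : 5 ^ (2 * k + 1) % 8 = 5 := by simp [pow_succ, pow_mul, mul_mod, pow_mod]
    have he : e = 2 := by
      have : e < 3 := by
        by_contra! he
        have : 2 ^ e % 8 = 0 := mod_eq_zero_of_dvd (pow_dvd_pow 2 he)
        omega
      interval_cases e <;> simp_all
    subst he
    exact ⟨Nat.pow_right_injective (by norm_num) (h.trans (pow_one 5).symm), rfl⟩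

theorem eq_zero_or_eq_zero_of_coprime_pow {p a b : ℕ} (hp : p ≠ 1)
    (h : Coprime (p ^ a) (p ^ b)) : a = 0 ∨ b = 0 := by
  by_contra! hab
  exact hp (Coprime.eq_one_of_dvd (h.coprime_dvd_left (dvd_pow_self p hab.1))
    (dvd_pow_self p hab.2))

theorem pow_mul_pow_mem_factoredNumbers {p q : ℕ} (hp : p.Prime) (hq : q.Prime) (m k : ℕ) :
    p ^ m * q ^ k ∈ factoredNumbers {p, q} :=
  mem_factoredNumbers'.mpr fun r hr hdvd => by
    rcases hr.dvd_mul.mp hdvd with h | h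
    · simp [(prime_dvd_prime_iff_eq hr hp).mp (hr.dvd_of_dvd_pow h)]
    · simp [(prime_dvd_prime_iff_eq hr hq).mp (hr.dvd_of_dvd_pow h)]

theorem exists_eq_pow_of_mem_factoredNumbers_pair {p q m : ℕ} (hm : m ∈ factoredNumbers {p, q})
    (hp : ¬ p ∣ m) : ∃ k, m = q ^ k := by
  refine ⟨_, eq_prime_pow_of_unique_prime_dvd (ne_zero_of_mem_factoredNumbers hm)
    fun hd hdm => ?_⟩
  rcases Finset.mem_insert.mp (mem_factoredNumbers'.mp hm _ hd hdm) with rfl | hdq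
  · exact absurd hdm hp
  · exact Finset.mem_singleton.mp hdq

theorem eq_one_of_mem_factoredNumbers_pair {p q m : ℕ} (hm : m ∈ factoredNumbers {p, q})
    (hp : ¬ p ∣ m) (hq : ¬ q ∣ m) : m = 1 := by
  obtain ⟨k, rfl⟩ := exists_eq_pow_of_mem_factoredNumbers_pair hm hp
  rcases k with _ | k
  · rfl
  · exact absurd (dvd_pow_self q k.succ_ne_zero) hq

theorem eq_of_add_eq_of_mem_factoredNumbers {x y z : ℕ} (hx : x ∈ factoredNumbers {2, 5})
    (hy : y ∈ factoredNumbers {2, 5}) (hz : z ∈ factoredNumbers {2, 5}) (hxy : x.Coprime y)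
    (h : x + y = z) : (x = 1 ∧ y = 1) ∨ (x = 1 ∧ y = 4) ∨ (x = 4 ∧ y = 1) := by
  have hxz : x.Coprime z := h ▸ coprime_self_add_right.mpr hxy
  have hyz : y.Coprime z := h ▸ coprime_add_self_right.mpr hxy.symm
  by_cases h2 : 2 ∣ z
  · have hx2 : ¬ 2 ∣ x := fun hx2 => not_coprime_of_dvd_of_dvd (by norm_num) hx2 h2 hxz
    have hy2 : ¬ 2 ∣ y := fun hy2 => not_coprime_of_dvd_of_dvd (by norm_num) hy2 h2 hyz
    have h5 : ¬ 5 ∣ z := by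
      intro h5
      have hx1 := eq_one_of_mem_factoredNumbers_pair hx hx2
        fun hx5 => not_coprime_of_dvd_of_dvd (by norm_num) hx5 h5 hxz
      have hy1 := eq_one_of_mem_factoredNumbers_pair hy hy2
        fun hy5 => not_coprime_of_dvd_of_dvd (by norm_num) hy5 h5 hyz
      omega
    obtain ⟨b, rfl⟩ := exists_eq_pow_of_mem_factoredNumbers_pair hx hx2
    obtain ⟨d, rfl⟩ := exists_eq_pow_of_mem_factoredNumbers_pair hy hy2
    obtain ⟨e, rfl⟩ :=
      exists_eq_pow_of_mem_factoredNumbers_pair (Finset.pair_comm 2 5 ▸ hz) h5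
    rcases eq_zero_or_eq_zero_of_coprime_pow (by norm_num) hxy with rfl | rfl
    · obtain ⟨-, rfl⟩ := two_pow_eq_five_pow_add_one (h.symm.trans (add_comm _ _))
      simp
    · obtain ⟨-, rfl⟩ := two_pow_eq_five_pow_add_one h.symm
      simp
  · obtain ⟨f, rfl⟩ := exists_eq_pow_of_mem_factoredNumbers_pair hz h2
    have hf : f ≠ 0 := by
      rintro rfl
      have := ne_zero_of_mem_factoredNumbers hx
      have := ne_zero_of_mem_factoredNumbers hy
      simp only [pow_zero] at h
      omega
    have h5 : 5 ∣ 5 ^ f := dvd_pow_self 5 hf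
    have hx5 : ¬ 5 ∣ x := fun hx5 => not_coprime_of_dvd_of_dvd (by norm_num) hx5 h5 hxz
    have hy5 : ¬ 5 ∣ y := fun hy5 => not_coprime_of_dvd_of_dvd (by norm_num) hy5 h5 hyz
    obtain ⟨a, rfl⟩ :=
      exists_eq_pow_of_mem_factoredNumbers_pair (Finset.pair_comm 2 5 ▸ hx) hx5
    obtain ⟨c, rfl⟩ :=
      exists_eq_pow_of_mem_factoredNumbers_pair (Finset.pair_comm 2 5 ▸ hy) hy5
    rcases eq_zero_or_eq_zero_of_coprime_pow (by norm_num) hxy with rfl | rfl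
    · obtain ⟨-, rfl⟩ := five_pow_eq_two_pow_add_one (h.symm.trans (add_comm _ _))
      simp
    · obtain ⟨-, rfl⟩ := five_pow_eq_two_pow_add_one h.symm
      simp

end Nat

open Nat

theorem exists_zpow_eq_pow_div_pow {α : Type*} [DivisionMonoid α] (c : α) (a : ℤ) :
    ∃ m n : ℕ, c ^ a = c ^ m / c ^ n := by
  obtain ⟨m, rfl | rfl⟩ := Int.eq_nat_or_neg a
  · exact ⟨m, 0, by simp⟩
  · exact ⟨0, m, by simp⟩

theorem Rat.mem_factoredNumbers_of_eq_div {s : Finset ℕ} {u : ℚ} {N D : ℕ}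
    (hN : N ∈ factoredNumbers s) (hD : D ∈ factoredNumbers s) (hu : u = N / D) :
    u.num.natAbs ∈ factoredNumbers s ∧ u.den ∈ factoredNumbers s := by
  have hD0 : (D : ℤ) ≠ 0 := by exact_mod_cast ne_zero_of_mem_factoredNumbers hD
  rw [show (N : ℚ) / D = Rat.divInt N D by rw [Rat.divInt_eq_div]; push_cast; rfl] at hu
  subst hu
  exact ⟨mem_factoredNumbers_of_dvd hN (Int.natAbs_dvd_natAbs.mpr (Rat.num_dvd _ hD0)),
    mem_factoredNumbers_of_dvd hD (Int.natCast_dvd_natCast.mp (Rat.den_dvd _ _))⟩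

theorem Rat.num_one_sub (u : ℚ) : (1 - u).num = u.den - u.num := by
  have hden : (1 - u).den = u.den := by simp
  have : ((1 - u).num : ℚ) = u.den - u.num := by
    rw [← Rat.mul_den_eq_num, hden, sub_mul, one_mul, Rat.mul_den_eq_num]
  exact_mod_cast this

theorem IsS25Unit.mem_factoredNumbers {u : ℚ} (hu : IsS25Unit u) :
    u.num.natAbs ∈ factoredNumbers {2, 5} ∧ u.den ∈ factoredNumbers {2, 5} := by
  obtain ⟨a, b, hab⟩ := hu
  obtain ⟨m, n, h2⟩ := exists_zpow_eq_pow_div_pow (2 : ℚ) a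
  obtain ⟨k, l, h5⟩ := exists_zpow_eq_pow_div_pow (5 : ℚ) b
  have hq : (2 : ℚ) ^ a * 5 ^ b = ((2 ^ m * 5 ^ k : ℕ) : ℚ) / (2 ^ n * 5 ^ l : ℕ) := by
    rw [h2, h5]; push_cast; ring
  have key := Rat.mem_factoredNumbers_of_eq_div
    (pow_mul_pow_mem_factoredNumbers prime_two prime_five m k)
    (pow_mul_pow_mem_factoredNumbers prime_two prime_five n l) hq
  rcases hab with rfl | rfl
  · exact key
  · simpa only [Rat.num_neg_eq_neg_num, Int.natAbs_neg, Rat.neg_den] using key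

/-- The first coordinates of the solutions, which are the pairs `(u, 1 - u)`. -/
def s25Solutions : Set ℚ := {1/2, 2, -1, 5, -4, 1/5, 4/5, 5/4, -1/4}

theorem div_mem_s25Solutions {x : ℤ} {n : ℕ} (hx : x.natAbs ∈ factoredNumbers {2, 5})
    (hn : n ∈ factoredNumbers {2, 5}) (hy : (n - x).natAbs ∈ factoredNumbers {2, 5})
    (hxn : x.natAbs.Coprime n) : (x / n : ℚ) ∈ s25Solutions := by
  have hx0 := ne_zero_of_mem_factoredNumbers hx
  have hy0 := ne_zero_of_mem_factoredNumbers hy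
  generalize ha : x.natAbs = a at *
  generalize hb : (n - x).natAbs = b at *
  rcases lt_or_gt_of_ne (show x ≠ 0 by omega) with hneg | hpos
  · obtain rfl : b = a + n := by omega
    obtain rfl : x = -a := by omega
    rcases eq_of_add_eq_of_mem_factoredNumbers hx hn hy hxn rfl with
      ⟨rfl, rfl⟩ | ⟨rfl, rfl⟩ | ⟨rfl, rfl⟩ <;> norm_num [s25Solutions]
  rcases lt_or_gt_of_ne (show x ≠ n by omega) with hlt | hgt
  · obtain rfl : n = a + b := by omega
    obtain rfl : x = a := by omega
    rcases eq_of_add_eq_of_mem_factoredNumbers hx hy hn (coprime_self_add_right.mp hxn) rfl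
      with ⟨rfl, rfl⟩ | ⟨rfl, rfl⟩ | ⟨rfl, rfl⟩ <;> norm_num [s25Solutions]
  · obtain rfl : a = n + b := by omega
    obtain rfl : x = ↑(n + b) := by omega
    rcases eq_of_add_eq_of_mem_factoredNumbers hn hy hx (coprime_self_add_left.mp hxn).symm rfl
      with ⟨rfl, rfl⟩ | ⟨rfl, rfl⟩ | ⟨rfl, rfl⟩ <;> norm_num [s25Solutions]

theorem isS25Unit_of_mem_s25Solutions {u : ℚ} (hu : u ∈ s25Solutions) : IsS25Unit u := by
  simp only [s25Solutions, Set.mem_insert_iff, Set.mem_singleton_iff] at hu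
  rcases hu with rfl | rfl | rfl | rfl | rfl | rfl | rfl | rfl | rfl
  exacts [⟨-1, 0, by norm_num⟩, ⟨1, 0, by norm_num⟩, ⟨0, 0, by norm_num⟩, ⟨0, 1, by norm_num⟩,
    ⟨2, 0, by norm_num⟩, ⟨0, -1, by norm_num⟩, ⟨2, -1, by norm_num⟩, ⟨-2, 1, by norm_num⟩,
    ⟨-2, 0, by norm_num⟩]

theorem one_sub_mem_s25Solutions {u : ℚ} (hu : u ∈ s25Solutions) : 1 - u ∈ s25Solutions := by
  simp only [s25Solutions, Set.mem_insert_iff, Set.mem_singleton_iff] at hu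
  rcases hu with rfl | rfl | rfl | rfl | rfl | rfl | rfl | rfl | rfl <;> norm_num [s25Solutions]

theorem mem_s25Solutions_iff {u : ℚ} :
    u ∈ s25Solutions ↔ IsS25Unit u ∧ IsS25Unit (1 - u) := by
  refine ⟨fun hu => ⟨isS25Unit_of_mem_s25Solutions hu,
    isS25Unit_of_mem_s25Solutions (one_sub_mem_s25Solutions hu)⟩, fun ⟨hu, hv⟩ => ?_⟩
  obtain ⟨hx, hn⟩ := hu.mem_factoredNumbers
  have hy := hv.mem_factoredNumbers.1
  rw [Rat.num_one_sub] at hy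
  rw [← Rat.num_div_den u]
  exact div_mem_s25Solutions hx hn hy u.reduced

theorem ncard_s25Solutions : s25Solutions.ncard = 9 := by
  rw [s25Solutions]
  norm_num [Set.ncard_insert_of_notMem]

/-- The `S`-unit equation `u + v = 1` with `u, v ∈ ℤ[1/S]ˣ` for `S = {2,5}` has
exactly `9` solutions `(u, v)`. -/
theorem sUnitEquation_S_eq_two_five :
    {p : ℚ × ℚ | IsS25Unit p.1 ∧ IsS25Unit p.2 ∧ p.1 + p.2 = 1}.ncard = 9 := by
  have hsol : {p : ℚ × ℚ | IsS25Unit p.1 ∧ IsS25Unit p.2 ∧ p.1 + p.2 = 1} =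
      (fun u => (u, 1 - u)) '' s25Solutions := by
    ext ⟨u, v⟩
    simp only [Set.mem_ofPred_eq, Set.mem_image, Prod.mk.injEq, mem_s25Solutions_iff]
    constructor
    · rintro ⟨hu, hv, huv⟩
      obtain rfl : v = 1 - u := by linarith
      exact ⟨u, ⟨hu, hv⟩, rfl, rfl⟩
    · rintro ⟨u, ⟨hu, hv⟩, rfl, rfl⟩
      exact ⟨hu, hv, by ring⟩
  rw [hsol, Set.ncard_image_of_injective _ fun _ _ h => congrArg Prod.fst h, ncard_s25Solutions]
end
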